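/- Fix an effective divisor E on C of degree ≥ 2g + 1, put A = ⊕_{m=0}^∞ L(2mE), n = ℓ(E) = deg E − g + 1, and L = L(2E); for each divisor D of degree zero fix a 2E-form X_D representing D + E. Fix an E-compression functional ρ : L(4E) → k, Segre matrices X and X' of type (k, n, A, L), and divisors D and D' of degree zero such that X is k-equivalent to X_D and X' is k-equivalent to X_{D'}. Then for any n² × n² permutation matrices P and Q such that, for the block decomposition of P(X ∘ X')Q whose lower-right corner consists of blocks [[a, b], [c, d]] with a of size deg E × deg E and d of size n × n, the block z defined by [[w, x], [y, z]] = |ρa|·[[|ρa|, 0], [−(ρc)(ρa)^★, |ρa|]]·[[a, b], [c, d]]·[[|ρa|, −(ρa)^★(ρb)], [0, |ρa|]] is k-general, the matrix z is a Segre matrix of type (k, n, A, L), i.e., a 2E-form, and moreover z is k-equivalent to X_{D + D'}; in particular z represents E + D + D'. (Here ρa, ρb, ρc denote the matrices obtained by applying ρ entrywise, |·| denotes the determinant, and ★ the adjugate.) -/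

import Mathlib

/-!
Write `X = u vᵀ` and `X' = u' v'ᵀ` with `u, u'` bases of `L(D + E), L(D' + E)` and `v, v'` bases
of `L(E - D), L(E - D')`. Then the lower-right corner of `P (X ∘ X') Q` is again of rank one,
`W Zᵀ`, with `W` in `L(D₀)`, `D₀ = D + D' + 2E`, and `Z` in `L(4E - D₀)`, and the two elimination
matrices keep it of rank one: `z = ũ ṽᵀ`, where `ρ(ũᵢ Z_l) = 0 = ρ(W_l ṽⱼ)` for the pivot
indices `l`. As `z` is `k`-general, `det (ρ a) ≠ 0`, so the pivot functions give bases of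
`L(D₀)/L(D₀ - E)` and `L(4E - D₀)/L(4E - D₀ - E)`, and perfectness of the `ρ`-pairing puts
`ũ` in `L(E + D + D')` and `ṽ` in `L(E - D - D')`. Being independent of the right size
(Riemann–Roch), they are bases, so `z` represents `E + D + D'`; two `2E`-forms representing the
same divisor differ by a change of bases, i.e. are `k`-equivalent.
-/

/-- All 2×2 minors of a matrix vanish, i.e. the matrix has rank at most 1. -/
def MinorsVanish {R : Type} [CommRing R] {m n : Type} (M : Matrix m n R) : Prop :=
  ∀ i i' j j', M i j * M i' j' = M i j' * M i' j

/-- A matrix is `k`-general if some row and some column each consist of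
`k`-linearly independent entries. -/
def KGeneral (k : Type) [Field k] {V : Type} [AddCommMonoid V] [Module k V]
    {m n : Type} (M : Matrix m n V) : Prop :=
  (∃ i, LinearIndependent k fun j => M i j) ∧ ∃ j, LinearIndependent k fun i => M i j

/-- Two matrices over a `k`-algebra are `k`-equivalent if `Y = Φ X Ψ` for some
invertible square matrices `Φ`, `Ψ` with entries in `k`. -/
def KEquivalent (k : Type) [Field k] {A : Type} [CommRing A] [Algebra k A]
    {m n : Type} [Fintype m] [Fintype n] [DecidableEq m] [DecidableEq n]
    (X Y : Matrix m n A) : Prop :=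
  ∃ (Φ : Matrix m m k) (Ψ : Matrix n n k), IsUnit Φ.det ∧ IsUnit Ψ.det ∧
    Y = Φ.map (algebraMap k A) * X * Ψ.map (algebraMap k A)

/-- An abstraction of a nonsingular projective curve `C` of genus `g` over an
algebraically closed field `k`, packaged together with its function field `F = k(C)`,
the divisor `div f` of a nonzero rational function (divisors are finitely supported
`ℤ`-valued functions on the points of `C`), the Riemann–Roch spaces
`L(D) = {f : f = 0 ∨ div f + D ≥ 0}`, the rings `R_E` of functions regular near the
support of a divisor and the ideals `I_E` of functions vanishing to order at least `E`,
subject to the standard facts about them (including the Riemann–Roch theorem). -/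
structure AbstractCurve (k : Type) [Field k] : Type 1 where
  /-- the points of the curve -/
  Point : Type
  /-- the function field `k(C)` -/
  F : Type
  [fieldF : Field F]
  [algF : Algebra k F]
  /-- the genus of the curve -/
  genus : ℕ
  /-- `divOf f` is the divisor of zeros and poles of `f` (junk value `0` at `f = 0`);
  its value at a point `p` is the order of vanishing of `f` at `p`. -/
  divOf : F → (Point →₀ ℤ)
  divOf_mul : ∀ f g : F, f ≠ 0 → g ≠ 0 → divOf (f * g) = divOf f + divOf g
  divOf_algebraMap : ∀ c : k, c ≠ 0 → divOf (algebraMap k F c) = 0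
  divOf_eq_zero_iff : ∀ f : F, f ≠ 0 →
    (divOf f = 0 ↔ ∃ c : k, c ≠ 0 ∧ f = algebraMap k F c)
  /-- a principal divisor has degree zero -/
  deg_divOf : ∀ f : F, f ≠ 0 → (divOf f).sum (fun _ n => n) = 0
  /-- the Riemann–Roch space `L(D)` as a `k`-subspace of the function field -/
  RR : (Point →₀ ℤ) → Submodule k F
  mem_RR : ∀ (D : Point →₀ ℤ) (f : F), f ∈ RR D ↔ f = 0 ∨ 0 ≤ divOf f + D
  finite_RR : ∀ D : Point →₀ ℤ, Module.Finite k (RR D)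
  /-- the Riemann–Roch theorem: `ℓ(D) = deg D - g + 1` whenever `deg D > 2g - 2` -/
  rank_RR : ∀ D : Point →₀ ℤ, 2 * (genus : ℤ) - 2 < D.sum (fun _ n => n) →
    (Module.finrank k (RR D) : ℤ) = D.sum (fun _ n => n) - genus + 1
  /-- the `k`-space `R_E` of functions regular in a neighborhood of the support of `E` -/
  Reg : (Point →₀ ℤ) → Submodule k F
  mem_Reg : ∀ (E : Point →₀ ℤ) (f : F),
    f ∈ Reg E ↔ f = 0 ∨ ∀ p ∈ E.support, 0 ≤ divOf f p
  /-- the `k`-space `I_E ⊆ R_E` of functions vanishing to order at least `E` -/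
  VanishIdeal : (Point →₀ ℤ) → Submodule k F
  mem_VanishIdeal : ∀ (E : Point →₀ ℤ) (f : F),
    f ∈ VanishIdeal E ↔ f = 0 ∨ ∀ p ∈ E.support, E p ≤ divOf f p

namespace AbstractCurve

attribute [instance] fieldF algF

variable {k : Type} [Field k]

/-- The degree of a divisor. -/
def deg (C : AbstractCurve k) (D : C.Point →₀ ℤ) : ℤ := D.sum fun _ n => n

/-- Linear equivalence of divisors: `D ~ D'` iff `D' = D + div f` for some `f ≠ 0`. -/
def LinEquiv (C : AbstractCurve k) (D D' : C.Point →₀ ℤ) : Prop :=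
  ∃ f : C.F, f ≠ 0 ∧ D' = D + C.divOf f

/-- A `G`-form: a square matrix with entries in `L(G)`, all of whose 2×2 minors vanish,
and which is `k`-general.  (In context its size is `n = ½ deg G - g + 1`.) -/
def IsGForm (C : AbstractCurve k) (G : C.Point →₀ ℤ) {n : ℕ}
    (X : Matrix (Fin n) (Fin n) C.F) : Prop :=
  (∀ i j, X i j ∈ C.RR G) ∧ MinorsVanish X ∧ KGeneral k X

/-- The `G`-form `X` represents the divisor `D` (of degree `½ deg G`): `X = u v` where
the entries of the column vector `u` form a `k`-basis of `L(D)` and the entries of the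
row vector `v` form a `k`-basis of `L(G - D)`. -/
def Represents (C : AbstractCurve k) (G D : C.Point →₀ ℤ) {n : ℕ}
    (X : Matrix (Fin n) (Fin n) C.F) : Prop :=
  ∃ u v : Fin n → C.F,
    LinearIndependent k u ∧ Submodule.span k (Set.range u) = C.RR D ∧
    LinearIndependent k v ∧ Submodule.span k (Set.range v) = C.RR (G - D) ∧
    ∀ i j, X i j = u i * v j

/-- An `E`-compression functional `ρ : L(G) → k` (realized as a `k`-linear functional
on the function field): `ρ` kills `L(G - E)`, and for every divisor `D` of degree
`½ deg G` the induced pairing `(a, b) ↦ ρ(ab)` on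
`L(D)/L(D-E) × L(G-D)/L(G-D-E)` is a perfect pairing of `(deg E)`-dimensional
`k`-vector spaces (expressed by nondegeneracy on both sides together with both
quotients having dimension `deg E`). -/
def IsCompression (C : AbstractCurve k) (G E : C.Point →₀ ℤ) (ρ : C.F →ₗ[k] k) : Prop :=
  (∀ f ∈ C.RR (G - E), ρ f = 0) ∧
  ∀ D : C.Point →₀ ℤ, 2 * C.deg D = C.deg G →
    (∀ a ∈ C.RR D, (∀ b ∈ C.RR (G - D), ρ (a * b) = 0) → a ∈ C.RR (D - E)) ∧
    (∀ b ∈ C.RR (G - D), (∀ a ∈ C.RR D, ρ (a * b) = 0) → b ∈ C.RR (G - D - E)) ∧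
    (Module.finrank k
      (C.RR D ⧸ Submodule.comap (C.RR D).subtype (C.RR (D - E))) : ℤ) = C.deg E ∧
    (Module.finrank k
      (C.RR (G - D) ⧸
        Submodule.comap (C.RR (G - D)).subtype (C.RR (G - D - E))) : ℤ) = C.deg E

end AbstractCurve
/-- The lower-right `q × q` block of an `N × N` matrix, `N = m + q`. -/
def lowerRightBlock {R : Type} {N m q : ℕ} (h : N = m + q)
    (M : Matrix (Fin N) (Fin N) R) : Matrix (Fin q) (Fin q) R :=
  M.submatrix (fun i => (finCongr h.symm) (finSumFinEquiv (Sum.inr i)))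
    (fun j => (finCongr h.symm) (finSumFinEquiv (Sum.inr j)))

/-- View an `N × N` matrix, `N = e + n`, as a block matrix indexed by `Fin e ⊕ Fin n`
(upper-left block of size `e × e`, lower-right block of size `n × n`). -/
def asBlocks {R : Type} {N e n : ℕ} (h : N = e + n)
    (M : Matrix (Fin N) (Fin N) R) : Matrix (Fin e ⊕ Fin n) (Fin e ⊕ Fin n) R :=
  M.submatrix (fun p => (finCongr h.symm) (finSumFinEquiv p))
    (fun p => (finCongr h.symm) (finSumFinEquiv p))

/-- Given `n × n` matrices `X`, `X'` over `F`, permutations `σ`, `τ` of `Fin (n²)` and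
a functional `ρ`, form `P (X ∘ X') Q` (`∘` the Kronecker product, `P`, `Q` the
permutation matrices of `σ`, `τ`), take the blocks `[[a, b], [c, d]]` in its
lower-right corner (`a` of size `e × e`, `d` of size `n × n`), and return the block `z`
from
`[[w, x], [y, z]] = |ρa| · [[|ρa|, 0], [-(ρc)(ρa)^★, |ρa|]] · [[a, b], [c, d]] · [[|ρa|, -(ρa)^★(ρb)], [0, |ρa|]]`,
where `ρ` is applied entrywise, `|·|` is the determinant and `★` the adjugate. -/
noncomputable def compressedKroneckerBlock {k : Type} [Field k] {F : Type} [Field F]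
    [Algebra k F] (e m n : ℕ) (h : n * n = m + (e + n))
    (X X' : Matrix (Fin n) (Fin n) F) (σ τ : Equiv.Perm (Fin (n * n)))
    (ρ : F →ₗ[k] k) : Matrix (Fin n) (Fin n) F :=
  let B := asBlocks (rfl : e + n = e + n)
    (lowerRightBlock h ((Matrix.reindex finProdFinEquiv finProdFinEquiv
      (Matrix.kroneckerMap (· * ·) X X')).submatrix σ τ))
  let a := B.toBlocks₁₁
  let b := B.toBlocks₁₂
  let c := B.toBlocks₂₁
  let δ : k := (a.map ρ).det
  (δ • ((Matrix.fromBlocks (δ • 1) 0 (-(c.map ρ * (a.map ρ).adjugate)) (δ • 1)).map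
        (algebraMap k F) * B *
      (Matrix.fromBlocks (δ • 1) (-((a.map ρ).adjugate * b.map ρ)) 0 (δ • 1)).map
        (algebraMap k F))).toBlocks₂₂

open Matrix Module Submodule Set

section LinearAlgebra

variable {k F : Type*} [Field k] [CommRing F] [Algebra k F] {ι : Type*} [Fintype ι]

lemma Matrix.map_algebraMap_mulVec (P : Matrix ι ι k) (u : ι → F) :
    P.map (algebraMap k F) *ᵥ u = fun i => ∑ j, P i j • u j := by
  ext i
  simp [mulVec, dotProduct, Algebra.smul_def]

lemma Matrix.map_algebraMap_mulVec_mem {S : Submodule k F} (P : Matrix ι ι k) {u : ι → F}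
    (hu : ∀ j, u j ∈ S) (i : ι) : (P.map (algebraMap k F) *ᵥ u) i ∈ S := by
  rw [map_algebraMap_mulVec]
  exact sum_mem fun j _ => smul_mem _ _ (hu j)

lemma LinearIndependent.span_range_eq_of_card_eq_finrank {u : ι → F} (hu : LinearIndependent k u)
    {S : Submodule k F} [FiniteDimensional k S] (hmem : ∀ i, u i ∈ S)
    (hcard : Fintype.card ι = finrank k S) : span k (range u) = S :=
  eq_of_le_of_finrank_eq (span_le.mpr (range_subset_iff.mpr hmem))
    (by rw [finrank_span_eq_card hu, hcard])

lemma Submodule.le_sup_span_range_of_linearIndependent_mkQ {S T : Submodule k F}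
    [FiniteDimensional k S] {z : ι → F} (hz : ∀ l, z l ∈ S)
    (hind : LinearIndependent k fun l => (T.comap S.subtype).mkQ ⟨z l, hz l⟩)
    (hcard : Fintype.card ι = finrank k (S ⧸ T.comap S.subtype)) :
    S ≤ T ⊔ span k (range z) := by
  intro b hb
  have hmem : (T.comap S.subtype).mkQ ⟨b, hb⟩ ∈ span k (range _) :=
    (hind.span_eq_top_of_card_eq_finrank' hcard).symm ▸ mem_top
  obtain ⟨c, hc⟩ := (mem_span_range_iff_exists_fun k).mp hmem
  have hT : b - ∑ l, c l • z l ∈ T := by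
    have := (Submodule.Quotient.eq _).mp
      (show (T.comap S.subtype).mkQ ⟨b, hb⟩ = (T.comap S.subtype).mkQ (∑ l, c l • ⟨z l, hz l⟩) by
        rw [← hc, map_sum]
        simp_rw [LinearMap.map_smul])
    simpa using this
  exact mem_sup.mpr ⟨_, hT, _, sum_mem fun l _ => smul_mem _ _ (subset_span ⟨l, rfl⟩),
    sub_add_cancel _ _⟩

variable [DecidableEq ι]

lemma LinearIndependent.map_algebraMap_mulVec {P : Matrix ι ι k} (hP : IsUnit P.det)
    {u : ι → F} (hu : LinearIndependent k u) :
    LinearIndependent k (P.map (algebraMap k F) *ᵥ u) := by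
  have hrows := linearIndependent_rows_of_isUnit ((isUnit_iff_isUnit_det P).mpr hP)
  have hker := LinearMap.ker_eq_bot.mpr
    (linearIndependent_iff_injective_fintypeLinearCombination.mp hu)
  have heq : P.map (algebraMap k F) *ᵥ u = Fintype.linearCombination k u ∘ P.row := by
    rw [Matrix.map_algebraMap_mulVec]
    ext i
    simp [Fintype.linearCombination_apply]
  rw [heq]
  exact hrows.map' _ hker

lemma span_range_map_algebraMap_mulVec {P : Matrix ι ι k} (hP : IsUnit P.det) (u : ι → F) :
    span k (range (P.map (algebraMap k F) *ᵥ u)) = span k (range u) := by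
  have hle : ∀ (Q : Matrix ι ι k) (w : ι → F),
      span k (range (Q.map (algebraMap k F) *ᵥ w)) ≤ span k (range w) := fun Q w =>
    span_le.mpr <| range_subset_iff.mpr <|
      Q.map_algebraMap_mulVec_mem fun j => subset_span (mem_range_self j)
  refine le_antisymm (hle P u) ?_
  have hinv : P⁻¹.map (algebraMap k F) *ᵥ (P.map (algebraMap k F) *ᵥ u) = u := by
    rw [mulVec_mulVec, ← Matrix.map_mul, nonsing_inv_mul P hP,
      Matrix.map_one _ (map_zero _) (map_one _), one_mulVec]
  simpa only [hinv] using hle P⁻¹ (P.map (algebraMap k F) *ᵥ u)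

lemma exists_isUnit_det_map_algebraMap_mulVec_eq {u w : ι → F} (hu : LinearIndependent k u)
    (hw : LinearIndependent k w) (hspan : span k (range u) = span k (range w)) :
    ∃ P : Matrix ι ι k, IsUnit P.det ∧ u = P.map (algebraMap k F) *ᵥ w := by
  let bu := Basis.span hu
  let bw := (Basis.span hw).map (LinearEquiv.ofEq _ _ hspan.symm)
  refine ⟨(bw.toMatrix bu)ᵀ, ?_, ?_⟩
  · rw [det_transpose]
    have := bw.invertibleToMatrix bu
    exact isUnit_det_of_invertible _
  · ext i
    have h := congrArg Subtype.val (bw.sum_toMatrix_smul_self bu (j := i))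
    have hbu : ∀ j, (bu j : F) = u j := fun j => by simp [bu]
    have hbw : ∀ j, (bw j : F) = w j := fun j => by simp [bw]
    simp only [coe_sum, coe_smul, hbu, hbw] at h
    rw [map_algebraMap_mulVec]
    exact h.symm

end LinearAlgebra

lemma Matrix.mul_vecMulVec_mul {R m n : Type*} [CommRing R] [Fintype m] [Fintype n]
    (A : Matrix m m R) (u : m → R) (v : n → R) (B : Matrix n n R) :
    A * vecMulVec u v * B = vecMulVec (A *ᵥ u) (Bᵀ *ᵥ v) := by
  rw [mul_vecMulVec, vecMulVec_mul, mulVec_transpose]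

section KEquivalence

variable {k F : Type} [Field k] [CommRing F] [Algebra k F] {m n : Type}

lemma KEquivalent.symm [Fintype m] [Fintype n] [DecidableEq m] [DecidableEq n]
    {X Y : Matrix m n F} (h : KEquivalent k X Y) : KEquivalent k Y X := by
  obtain ⟨Φ, Ψ, hΦ, hΨ, rfl⟩ := h
  refine ⟨Φ⁻¹, Ψ⁻¹, isUnit_nonsing_inv_det Φ hΦ, isUnit_nonsing_inv_det Ψ hΨ, ?_⟩
  calc X = (Φ⁻¹ * Φ).map (algebraMap k F) * X * (Ψ * Ψ⁻¹).map (algebraMap k F) := by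
        simp [nonsing_inv_mul Φ hΦ, mul_nonsing_inv Ψ hΨ]
    _ = _ := by simp only [Matrix.map_mul, Matrix.mul_assoc]

lemma KGeneral.ne_zero {V : Type} [AddCommMonoid V] [Module k V] {M : Matrix m n V}
    (h : KGeneral k M) : M ≠ 0 := by
  obtain ⟨⟨i, hi⟩, j, -⟩ := h
  rintro rfl
  exact hi.ne_zero j rfl

lemma KGeneral.linearIndependent_left {u : m → F} {v : n → F} (h : KGeneral k (vecMulVec u v)) :
    LinearIndependent k u := by
  obtain ⟨-, j, hj⟩ := h
  exact LinearIndependent.of_comp (LinearMap.mulRight k (v j)) hj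

lemma KGeneral.linearIndependent_right {u : m → F} {v : n → F} (h : KGeneral k (vecMulVec u v)) :
    LinearIndependent k v := by
  obtain ⟨⟨i, hi⟩, -⟩ := h
  exact LinearIndependent.of_comp (LinearMap.mulLeft k (u i)) hi

end KEquivalence

namespace AbstractCurve

variable {k : Type} [Field k] {C : AbstractCurve k}

lemma deg_add (A B : C.Point →₀ ℤ) : C.deg (A + B) = C.deg A + C.deg B :=
  Finsupp.sum_add_index' (fun _ => rfl) fun _ _ _ => rfl

lemma deg_sub (A B : C.Point →₀ ℤ) : C.deg (A - B) = C.deg A - C.deg B := by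
  rw [eq_sub_iff_add_eq, ← deg_add, sub_add_cancel]

lemma deg_nsmul (m : ℕ) (A : C.Point →₀ ℤ) : C.deg (m • A) = m * C.deg A := by
  induction m with
  | zero => simp [deg]
  | succ m ih => rw [succ_nsmul, deg_add, ih]; push_cast; ring

lemma mul_mem_RR {A B : C.Point →₀ ℤ} {f g : C.F} (hf : f ∈ C.RR A) (hg : g ∈ C.RR B) :
    f * g ∈ C.RR (A + B) := by
  rw [C.mem_RR] at hf hg ⊢
  rcases hf with rfl | hf
  · simp
  rcases hg with rfl | hg
  · simp
  by_cases hfg : f * g = 0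
  · exact Or.inl hfg
  rw [C.divOf_mul f g (left_ne_zero_of_mul hfg) (right_ne_zero_of_mul hfg)]
  exact Or.inr (by simpa [add_add_add_comm] using add_nonneg hf hg)

variable {G D : C.Point →₀ ℤ} {n : ℕ} {X Y : Matrix (Fin n) (Fin n) C.F}

lemma Represents.of_kEquivalent (hYX : KEquivalent k Y X) (hY : C.Represents G D Y) :
    C.Represents G D X := by
  obtain ⟨Φ, Ψ, hΦ, hΨ, rfl⟩ := hYX
  obtain ⟨u, v, hu, hspu, hv, hspv, hY⟩ := hY
  have hΨ' : IsUnit Ψᵀ.det := by rwa [det_transpose]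
  refine ⟨_, _, hu.map_algebraMap_mulVec hΦ, (span_range_map_algebraMap_mulVec hΦ u).trans hspu,
    hv.map_algebraMap_mulVec hΨ', (span_range_map_algebraMap_mulVec hΨ' v).trans hspv,
    fun i j => ?_⟩
  rw [(Matrix.ext hY : Y = vecMulVec u v), mul_vecMulVec_mul, transpose_map]
  rfl

lemma Represents.kEquivalent (hX : C.Represents G D X) (hY : C.Represents G D Y) :
    KEquivalent k X Y := by
  obtain ⟨u, v, hu, hspu, hv, hspv, hX⟩ := hX
  obtain ⟨u', v', hu', hspu', hv', hspv', hY⟩ := hY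
  obtain ⟨P, hP, rfl⟩ := exists_isUnit_det_map_algebraMap_mulVec_eq hu' hu (hspu'.trans hspu.symm)
  obtain ⟨Q, hQ, rfl⟩ := exists_isUnit_det_map_algebraMap_mulVec_eq hv' hv (hspv'.trans hspv.symm)
  refine ⟨P, Qᵀ, hP, by rwa [det_transpose], ?_⟩
  rw [(Matrix.ext hX : X = vecMulVec u v), (Matrix.ext hY : Y = vecMulVec _ _),
    mul_vecMulVec_mul, ← transpose_map, transpose_transpose]

lemma Represents.exists_eq_vecMulVec (hX : C.Represents G D X) :
    ∃ u v : Fin n → C.F, X = vecMulVec u v ∧ (∀ i, u i ∈ C.RR D) ∧ ∀ j, v j ∈ C.RR (G - D) := by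
  obtain ⟨u, v, -, hspu, -, hspv, hX⟩ := hX
  exact ⟨u, v, Matrix.ext hX, fun i => hspu ▸ subset_span (mem_range_self i),
    fun j => hspv ▸ subset_span (mem_range_self j)⟩

lemma Represents.isGForm (hX : C.Represents G D X) (hgen : KGeneral k X) : C.IsGForm G X := by
  obtain ⟨u, v, rfl, hu, hv⟩ := hX.exists_eq_vecMulVec
  refine ⟨fun i j => ?_, fun i i' j j' => by simp only [vecMulVec_apply]; ring, hgen⟩
  simpa [vecMulVec_apply] using mul_mem_RR (hu i) (hv j)

end AbstractCurve

section BlockElimination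

variable {k : Type*} [CommRing k] {ι κ : Type*} [Fintype ι] [Fintype κ] [DecidableEq ι]
  [DecidableEq κ]

namespace Matrix

def lowerElim (M : Matrix (ι ⊕ κ) (ι ⊕ κ) k) : Matrix (ι ⊕ κ) (ι ⊕ κ) k :=
  fromBlocks (M.toBlocks₁₁.det • 1) 0 (-(M.toBlocks₂₁ * M.toBlocks₁₁.adjugate))
    (M.toBlocks₁₁.det • 1)

def upperElim (M : Matrix (ι ⊕ κ) (ι ⊕ κ) k) : Matrix (ι ⊕ κ) (ι ⊕ κ) k :=
  fromBlocks (M.toBlocks₁₁.det • 1) (-(M.toBlocks₁₁.adjugate * M.toBlocks₁₂)) 0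
    (M.toBlocks₁₁.det • 1)

lemma toBlocks₂₁_lowerElim_mul (M : Matrix (ι ⊕ κ) (ι ⊕ κ) k) :
    (M.lowerElim * M).toBlocks₂₁ = 0 := by
  conv_lhs => enter [1, 2]; rw [← fromBlocks_toBlocks M]
  rw [lowerElim, fromBlocks_multiply, toBlocks_fromBlocks₂₁, Matrix.neg_mul, Matrix.mul_assoc,
    adjugate_mul, Matrix.mul_smul, Matrix.smul_mul, Matrix.mul_one, Matrix.one_mul,
    neg_add_cancel]

lemma toBlocks₁₂_mul_upperElim (M : Matrix (ι ⊕ κ) (ι ⊕ κ) k) :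
    (M * M.upperElim).toBlocks₁₂ = 0 := by
  conv_lhs => enter [1, 1]; rw [← fromBlocks_toBlocks M]
  rw [upperElim, fromBlocks_multiply, toBlocks_fromBlocks₁₂, Matrix.mul_neg, ← Matrix.mul_assoc,
    mul_adjugate, Matrix.mul_smul, Matrix.smul_mul, Matrix.mul_one, Matrix.one_mul,
    neg_add_cancel]

end Matrix

end BlockElimination

section CompressBlock

variable {k F : Type} [Field k] [CommRing F] [Algebra k F] (ρ : F →ₗ[k] k)

lemma LinearMap.map_mulVec_mul {m n : Type*} [Fintype m] (P : Matrix m m k) (W : m → F)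
    (Z : n → F) (p : m) (q : n) :
    ρ ((P.map (algebraMap k F) *ᵥ W) p * Z q) = (P * (vecMulVec W Z).map ρ) p q := by
  simp [Matrix.map_algebraMap_mulVec, Finset.sum_mul, mul_apply, vecMulVec_apply]

lemma LinearMap.map_mul_mulVec {m n : Type*} [Fintype n] (Q : Matrix n n k) (W : m → F)
    (Z : n → F) (p : m) (q : n) :
    ρ (W p * (Q.map (algebraMap k F) *ᵥ Z) q) = ((vecMulVec W Z).map ρ * Qᵀ) p q := by
  simp [Matrix.map_algebraMap_mulVec, Finset.mul_sum, mul_apply, vecMulVec_apply, mul_comm]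

variable {ι κ : Type} [Fintype ι] [Fintype κ] [DecidableEq ι] [DecidableEq κ]

noncomputable def compressBlock (B : Matrix (ι ⊕ κ) (ι ⊕ κ) F) : Matrix κ κ F :=
  ((B.map ρ).toBlocks₁₁.det • ((B.map ρ).lowerElim.map (algebraMap k F) * B *
    (B.map ρ).upperElim.map (algebraMap k F))).toBlocks₂₂

noncomputable def compressLeft (W Z : ι ⊕ κ → F) (i : κ) : F :=
  algebraMap k F ((vecMulVec W Z).map ρ).toBlocks₁₁.det *
    (((vecMulVec W Z).map ρ).lowerElim.map (algebraMap k F) *ᵥ W) (Sum.inr i)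

noncomputable def compressRight (W Z : ι ⊕ κ → F) (j : κ) : F :=
  (((vecMulVec W Z).map ρ).upperElimᵀ.map (algebraMap k F) *ᵥ Z) (Sum.inr j)

lemma compressBlock_vecMulVec (W Z : ι ⊕ κ → F) :
    compressBlock ρ (vecMulVec W Z) = vecMulVec (compressLeft ρ W Z) (compressRight ρ W Z) := by
  ext i j
  rw [compressBlock, mul_vecMulVec_mul]
  simp only [toBlocks₂₂, Matrix.smul_apply, of_apply, vecMulVec_apply,
    compressLeft, compressRight, transpose_map, Algebra.smul_def, mul_assoc]

lemma isUnit_det_of_kGeneral_compressBlock {B : Matrix (ι ⊕ κ) (ι ⊕ κ) F}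
    (h : KGeneral k (compressBlock ρ B)) : IsUnit (B.map ρ).toBlocks₁₁.det :=
  isUnit_iff_ne_zero.mpr fun h0 => h.ne_zero (by rw [compressBlock, h0, zero_smul]; rfl)

variable {W Z : ι ⊕ κ → F}

lemma map_compressLeft_mul_eq_zero (i : κ) (l : ι) :
    ρ (compressLeft ρ W Z i * Z (Sum.inl l)) = 0 := by
  rw [compressLeft, mul_assoc, ← Algebra.smul_def, map_smul, ρ.map_mulVec_mul, smul_eq_mul]
  exact mul_eq_zero_of_right _ (congrFun (congrFun (toBlocks₂₁_lowerElim_mul _) i) l)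

lemma map_mul_compressRight_eq_zero (l : ι) (j : κ) :
    ρ (W (Sum.inl l) * compressRight ρ W Z j) = 0 := by
  rw [compressRight, ρ.map_mul_mulVec, transpose_transpose]
  exact congrFun (congrFun (toBlocks₁₂_mul_upperElim _) l) j

lemma compressLeft_mem {S : Submodule k F} (hW : ∀ p, W p ∈ S) (i : κ) :
    compressLeft ρ W Z i ∈ S := by
  rw [compressLeft, ← Algebra.smul_def]
  exact S.smul_mem _ (map_algebraMap_mulVec_mem _ hW _)

lemma compressRight_mem {S : Submodule k F} (hZ : ∀ q, Z q ∈ S) (j : κ) :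
    compressRight ρ W Z j ∈ S :=
  map_algebraMap_mulVec_mem _ hZ _

end CompressBlock

namespace AbstractCurve

variable {k : Type} [Field k] {C : AbstractCurve k} {G E D : C.Point →₀ ℤ} {ρ : C.F →ₗ[k] k}

lemma finrank_RR (hD : 2 * (C.genus : ℤ) - 2 < C.deg D) :
    (finrank k (C.RR D) : ℤ) = C.deg D - C.genus + 1 :=
  C.rank_RR D hD

lemma IsCompression.map_mul_eq_zero (hρ : C.IsCompression G E ρ) {a b : C.F} (ha : a ∈ C.RR D)
    (hb : b ∈ C.RR (G - D - E)) : ρ (a * b) = 0 := by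
  refine hρ.1 _ ?_
  rw [show G - E = D + (G - D - E) by abel]
  exact mul_mem_RR ha hb

variable {ι : Type} [Fintype ι] [DecidableEq ι] {W Z : ι → C.F}

lemma IsCompression.mem_RR_sub_of_map_mul_eq_zero (hρ : C.IsCompression G E ρ)
    (hD : 2 * C.deg D = C.deg G) (hι : (Fintype.card ι : ℤ) = C.deg E)
    (hW : ∀ l, W l ∈ C.RR D) (hZ : ∀ l, Z l ∈ C.RR (G - D))
    (hP : IsUnit ((vecMulVec W Z).map ρ).det) {a : C.F} (ha : a ∈ C.RR D)
    (haZ : ∀ l, ρ (a * Z l) = 0) : a ∈ C.RR (D - E) := by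
  obtain ⟨hnondeg, -, -, hdim⟩ := hρ.2 D hD
  have := C.finite_RR (G - D)
  set T := (C.RR (G - D - E)).comap (C.RR (G - D)).subtype
  let pairW : (C.RR (G - D) ⧸ T) →ₗ[k] ι → k :=
    T.liftQ ((LinearMap.pi fun i => ρ ∘ₗ LinearMap.mulLeft k (W i)) ∘ₗ (C.RR (G - D)).subtype)
      fun t ht => by ext i; exact hρ.map_mul_eq_zero (hW i) ht
  -- Pairing against `W` shows that the classes of the `Z l` are independent in
  -- `L(G - D) / L(G - D - E)`, hence a basis; so `a` pairs to zero with all of `L(G - D)`.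
  have hind : LinearIndependent k fun l => T.mkQ ⟨Z l, hZ l⟩ :=
    LinearIndependent.of_comp pairW
      (linearIndependent_cols_of_isUnit ((isUnit_iff_isUnit_det _).mpr hP))
  have hle := le_sup_span_range_of_linearIndependent_mkQ hZ hind
    (by rw [← Nat.cast_inj (R := ℤ)]; exact hι.trans hdim.symm)
  have hker : C.RR (G - D - E) ⊔ span k (range Z) ≤ LinearMap.ker (ρ ∘ₗ LinearMap.mulLeft k a) :=
    sup_le (fun t ht => hρ.map_mul_eq_zero ha ht) (span_le.mpr (range_subset_iff.mpr haZ))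
  exact hnondeg a ha fun b hb => hker (hle hb)

lemma IsCompression.mem_RR_sub_sub_of_map_mul_eq_zero (hρ : C.IsCompression G E ρ)
    (hD : 2 * C.deg D = C.deg G) (hι : (Fintype.card ι : ℤ) = C.deg E)
    (hW : ∀ l, W l ∈ C.RR D) (hZ : ∀ l, Z l ∈ C.RR (G - D))
    (hP : IsUnit ((vecMulVec W Z).map ρ).det) {b : C.F} (hb : b ∈ C.RR (G - D))
    (hWb : ∀ l, ρ (W l * b) = 0) : b ∈ C.RR (G - D - E) := by
  refine hρ.mem_RR_sub_of_map_mul_eq_zero (by rw [deg_sub]; omega) hι hZ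
    (by rwa [sub_sub_cancel]) ?_ hb fun l => by rw [mul_comm]; exact hWb l
  rwa [← transpose_vecMulVec, transpose_map, det_transpose]

lemma IsCompression.represents_compressBlock (hρ : C.IsCompression G E ρ)
    (hD : 2 * C.deg D = C.deg G) {e n : ℕ} (he : (e : ℤ) = C.deg E)
    (hn : (n : ℤ) = C.deg D - C.deg E - C.genus + 1)
    (hdeg : 2 * (C.genus : ℤ) - 2 < C.deg D - C.deg E) {W Z : Fin e ⊕ Fin n → C.F}
    (hW : ∀ p, W p ∈ C.RR D) (hZ : ∀ q, Z q ∈ C.RR (G - D))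
    (hgen : KGeneral k (compressBlock ρ (vecMulVec W Z))) :
    C.Represents (G - 2 • E) (D - E) (compressBlock ρ (vecMulVec W Z)) := by
  have hP := isUnit_det_of_kGeneral_compressBlock ρ hgen
  have he' : (Fintype.card (Fin e) : ℤ) = C.deg E := by simpa using he
  rw [compressBlock_vecMulVec] at hgen ⊢
  have hu : ∀ i, compressLeft ρ W Z i ∈ C.RR (D - E) := fun i =>
    hρ.mem_RR_sub_of_map_mul_eq_zero hD he' (fun _ => hW _) (fun _ => hZ _) hP
      (compressLeft_mem ρ hW i) (map_compressLeft_mul_eq_zero ρ i)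
  have hv : ∀ j, compressRight ρ W Z j ∈ C.RR (G - D - E) := fun j =>
    hρ.mem_RR_sub_sub_of_map_mul_eq_zero hD he' (fun _ => hW _) (fun _ => hZ _) hP
      (compressRight_mem ρ hZ j) fun l => map_mul_compressRight_eq_zero ρ l j
  have := C.finite_RR (D - E)
  have := C.finite_RR (G - D - E)
  have hdimu := finrank_RR (C := C) (D := D - E) (by rwa [deg_sub])
  have hdimv := finrank_RR (C := C) (D := G - D - E) (by rw [deg_sub, deg_sub]; omega)
  rw [deg_sub] at hdimu
  rw [deg_sub, deg_sub] at hdimv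
  refine ⟨_, _, hgen.linearIndependent_left,
    hgen.linearIndependent_left.span_range_eq_of_card_eq_finrank hu (by simp; omega),
    hgen.linearIndependent_right, ?_, fun _ _ => rfl⟩
  rw [show G - 2 • E - (D - E) = G - D - E by abel]
  exact hgen.linearIndependent_right.span_range_eq_of_card_eq_finrank hv (by simp; omega)

end AbstractCurve

lemma Matrix.kroneckerMap_mul_vecMulVec {R m n p q : Type*} [CommSemigroup R] (u₁ : m → R)
    (v₁ : n → R) (u₂ : p → R) (v₂ : q → R) :
    kroneckerMap (· * ·) (vecMulVec u₁ v₁) (vecMulVec u₂ v₂) =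
      vecMulVec (fun i => u₁ i.1 * u₂ i.2) (fun j => v₁ j.1 * v₂ j.2) := by
  ext i j
  simp only [kroneckerMap_apply, vecMulVec_apply]
  exact mul_mul_mul_comm _ _ _ _

lemma Matrix.submatrix_vecMulVec {R l m n o : Type*} [Mul R] (u : m → R) (v : o → R)
    (f : l → m) (g : n → o) :
    (vecMulVec u v).submatrix f g = vecMulVec (fun i => u (f i)) (fun j => v (g j)) :=
  rfl

lemma compressedKroneckerBlock_eq_compressBlock {k F : Type} [Field k] [Field F] [Algebra k F]
    (e m n : ℕ) (h : n * n = m + (e + n)) (X X' : Matrix (Fin n) (Fin n) F)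
    (σ τ : Equiv.Perm (Fin (n * n))) (ρ : F →ₗ[k] k) :
    ∃ f g : Fin e ⊕ Fin n → Fin n × Fin n, compressedKroneckerBlock e m n h X X' σ τ ρ =
      compressBlock ρ ((kroneckerMap (· * ·) X X').submatrix f g) :=
  ⟨fun p => finProdFinEquiv.symm (σ (finCongr h.symm (finSumFinEquiv (Sum.inr
      (finCongr (rfl : e + n = e + n).symm (finSumFinEquiv p)))))),
    fun q => finProdFinEquiv.symm (τ (finCongr h.symm (finSumFinEquiv (Sum.inr
      (finCongr (rfl : e + n = e + n).symm (finSumFinEquiv q)))))), rfl⟩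

open AbstractCurve in
theorem group_law_block_gform_general (k : Type) [Field k]
    (C : AbstractCurve k) (E : C.Point →₀ ℤ)
    (hdegE : 2 * (C.genus : ℤ) + 1 ≤ C.deg E)
    (e n : ℕ) (he : (e : ℤ) = C.deg E) (hn : (n : ℤ) = C.deg E - C.genus + 1)
    (XD : (C.Point →₀ ℤ) → Matrix (Fin n) (Fin n) C.F)
    (hXD : ∀ D : C.Point →₀ ℤ, C.deg D = 0 →
      C.IsGForm (2 • E) (XD D) ∧ C.Represents (2 • E) (D + E) (XD D))
    (ρ : C.F →ₗ[k] k) (hρ : C.IsCompression (4 • E) E ρ)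
    (D D' : C.Point →₀ ℤ) (hD : C.deg D = 0) (hD' : C.deg D' = 0)
    (X X' : Matrix (Fin n) (Fin n) C.F)
    (hXeq : KEquivalent k X (XD D)) (hX'eq : KEquivalent k X' (XD D'))
    (m : ℕ) (h : n * n = m + (e + n)) (σ τ : Equiv.Perm (Fin (n * n)))
    (hgen : KGeneral k (compressedKroneckerBlock e m n h X X' σ τ ρ)) :
    C.IsGForm (2 • E) (compressedKroneckerBlock e m n h X X' σ τ ρ) ∧
      KEquivalent k (compressedKroneckerBlock e m n h X X' σ τ ρ) (XD (D + D')) ∧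
      C.Represents (2 • E) (E + D + D') (compressedKroneckerBlock e m n h X X' σ τ ρ) := by
  obtain ⟨u, v, rfl, hu, hv⟩ := ((hXD D hD).2.of_kEquivalent hXeq.symm).exists_eq_vecMulVec
  obtain ⟨u', v', rfl, hu', hv'⟩ := ((hXD D' hD').2.of_kEquivalent hX'eq.symm).exists_eq_vecMulVec
  obtain ⟨f, g, hz⟩ := compressedKroneckerBlock_eq_compressBlock e m n h _ _ σ τ ρ
  rw [kroneckerMap_mul_vecMulVec, submatrix_vecMulVec] at hz
  have hdeg : C.deg ((D + E) + (D' + E)) = 2 * C.deg E := by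
    simp only [deg_add, hD, hD']; ring
  have hW : ∀ p, u (f p).1 * u' (f p).2 ∈ C.RR ((D + E) + (D' + E)) := fun p =>
    mul_mem_RR (hu _) (hu' _)
  have hZ : ∀ q, v (g q).1 * v' (g q).2 ∈ C.RR (4 • E - ((D + E) + (D' + E))) := fun q => by
    rw [show 4 • E - (D + E + (D' + E)) = 2 • E - (D + E) + (2 • E - (D' + E)) by abel]
    exact mul_mem_RR (hv _) (hv' _)
  have hrep := hρ.represents_compressBlock (D := (D + E) + (D' + E))
    (by rw [hdeg, deg_nsmul]; push_cast; ring) he (by omega) (by omega)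
    hW hZ (hz ▸ hgen)
  rw [← hz, show 4 • E - 2 • E = 2 • E by abel, show D + E + (D' + E) - E = E + D + D' by abel]
    at hrep
  have hXD₀ := (hXD (D + D') (by rw [deg_add, hD, hD', add_zero])).2
  rw [show D + D' + E = E + D + D' by abel] at hXD₀
  exact ⟨hrep.isGForm hgen, hrep.kEquivalent hXD₀, hrep⟩

open AbstractCurve in
/-- In the situation of the group-law construction (effective `E` of
degree `≥ 2g + 1`, `n = deg E - g + 1`, `X_D` a fixed `2E`-form representing `D + E`
for each degree-zero divisor `D`, `ρ : L(4E) → k` an `E`-compression functional, `X`,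
`X'` Segre matrices of type `(k, n, ⊕ₘ L(2mE), L(2E))` that are `k`-equivalent to
`X_D`, `X_{D'}` respectively), for **any** `n² × n²` permutation matrices `P`, `Q`
such that the block `z` obtained from the lower-right blocks `[[a, b], [c, d]]` of
`P (X ∘ X') Q` via
`[[w, x], [y, z]] = |ρa| · [[|ρa|, 0], [-(ρc)(ρa)^★, |ρa|]] · [[a, b], [c, d]] · [[|ρa|, -(ρa)^★(ρb)], [0, |ρa|]]`
is `k`-general, the matrix `z` is a Segre matrix of type `(k, n, ⊕ₘ L(2mE), L(2E))`,
i.e. a `2E`-form, and moreover `z` is `k`-equivalent to `X_{D + D'}`; in particular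
`z` represents `E + D + D'`. -/
theorem group_law_block_gform (k : Type) [Field k] [IsAlgClosed k]
    (C : AbstractCurve k) (E : C.Point →₀ ℤ) (hE : 0 ≤ E)
    (hdegE : 2 * (C.genus : ℤ) + 1 ≤ C.deg E)
    (e n : ℕ) (he : (e : ℤ) = C.deg E) (hn : (n : ℤ) = C.deg E - C.genus + 1)
    (XD : (C.Point →₀ ℤ) → Matrix (Fin n) (Fin n) C.F)
    (hXD : ∀ D : C.Point →₀ ℤ, C.deg D = 0 →
      C.IsGForm (2 • E) (XD D) ∧ C.Represents (2 • E) (D + E) (XD D))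
    (ρ : C.F →ₗ[k] k) (hρ : C.IsCompression (4 • E) E ρ)
    (D D' : C.Point →₀ ℤ) (hD : C.deg D = 0) (hD' : C.deg D' = 0)
    (X X' : Matrix (Fin n) (Fin n) C.F)
    (hX : C.IsGForm (2 • E) X) (hX' : C.IsGForm (2 • E) X')
    (hXeq : KEquivalent k X (XD D)) (hX'eq : KEquivalent k X' (XD D'))
    (m : ℕ) (h : n * n = m + (e + n)) (σ τ : Equiv.Perm (Fin (n * n)))
    (hgen : KGeneral k (compressedKroneckerBlock e m n h X X' σ τ ρ)) :
    C.IsGForm (2 • E) (compressedKroneckerBlock e m n h X X' σ τ ρ) ∧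
      KEquivalent k (compressedKroneckerBlock e m n h X X' σ τ ρ) (XD (D + D')) ∧
      C.Represents (2 • E) (E + D + D') (compressedKroneckerBlock e m n h X X' σ τ ρ) :=
  group_law_block_gform_general k C E hdegE e n he hn XD hXD ρ hρ D D' hD hD' X X' hXeq hX'eq m h σ
    τ hgen
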